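/- arXiv:2409.10091 — 2 statements merged into one kernel-verified Lean document; each statement's English description precedes it below -/
import Mathlib

section
/- For p > 0, the infimum over a ∈ [0,1) of (1 − a^p)/(2 − a² − a^p) equals min{p,2}/(2 + min{p,2}). -/
open Real Filter Topology

-- key pointwise inequality
lemma key_ineq (p : ℝ) (hp : 0 < p) (a : ℝ) (ha0 : 0 ≤ a) (ha1 : a < 1) :
    min p 2 * (1 - a ^ 2) ≤ 2 * (1 - a ^ p) := by
  rcases le_total p 2 with h | h
  · rw [min_eq_left h]
    have hq1 : p / 2 ≤ 1 := by linarith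
    have hq0 : (0:ℝ) ≤ p / 2 := by positivity
    have hs : (-1:ℝ) ≤ a ^ 2 - 1 := by nlinarith
    have hb := rpow_one_add_le_one_add_mul_self hs hq0 hq1
    have hrw : (1 + (a ^ 2 - 1)) ^ (p / 2) = a ^ p := by
      have : (1:ℝ) + (a ^ 2 - 1) = a ^ (2:ℝ) := by
        rw [Real.rpow_two]; ring
      rw [this, ← Real.rpow_mul ha0]
      norm_num
      ring_nf
    rw [hrw] at hb
    nlinarith
  · rw [min_eq_right h]
    have : a ^ p ≤ a ^ 2 := by
      rcases eq_or_lt_of_le ha0 with rfl | ha0'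
      · rw [Real.zero_rpow hp.ne']; positivity
      · calc a ^ p ≤ a ^ (2:ℝ) :=
              Real.rpow_le_rpow_of_exponent_ge ha0' ha1.le h
          _ = a ^ 2 := Real.rpow_two a
    nlinarith

lemma lower (p : ℝ) (hp : 0 < p) (a : ℝ) (ha0 : 0 ≤ a) (ha1 : a < 1) :
    min p 2 / (2 + min p 2) ≤ (1 - a ^ p) / (2 - a ^ 2 - a ^ p) := by
  have hap : a ^ p < 1 := Real.rpow_lt_one ha0 ha1 hp
  have ha2 : a ^ 2 < 1 := by nlinarith
  have hD : 0 < 2 - a ^ 2 - a ^ p := by linarith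
  have hm0 : 0 < min p 2 := lt_min hp two_pos
  have hm : 0 < 2 + min p 2 := by linarith
  rw [div_le_div_iff₀ hm hD]
  have := key_ineq p hp a ha0 ha1
  nlinarith

/-- For p > 0, the infimum over a ∈ [0,1) of (1 − aᵖ)/(2 − a² − aᵖ) equals
min{p,2}/(2 + min{p,2}). -/
theorem stmt_6 (p : ℝ) (hp : 0 < p) :
    sInf ((fun a : ℝ => (1 - a ^ p) / (2 - a ^ 2 - a ^ p)) '' Set.Ico (0:ℝ) 1)
      = min p 2 / (2 + min p 2) := by
  set f : ℝ → ℝ := fun a => (1 - a ^ p) / (2 - a ^ 2 - a ^ p) with hf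
  set S := f '' Set.Ico (0:ℝ) 1 with hS
  have hbdd : BddBelow S := by
    refine ⟨min p 2 / (2 + min p 2), ?_⟩
    rintro x ⟨a, ⟨ha0, ha1⟩, rfl⟩
    exact lower p hp a ha0 ha1
  refine le_antisymm ?_ ?_
  · -- sInf ≤ c
    rcases le_or_gt 2 p with h | h
    · have h0 : f 0 = min p 2 / (2 + min p 2) := by
        rw [min_eq_right h, hf]
        simp [Real.zero_rpow hp.ne']
        norm_num
      rw [← h0]
      exact csInf_le hbdd ⟨0, ⟨le_rfl, one_pos⟩, rfl⟩
    · rw [min_eq_left h.le]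
      -- limit argument
      have hslope : Filter.Tendsto (fun a : ℝ => (1 - a ^ p) / (1 - a))
          (nhdsWithin 1 (Set.Iio 1)) (nhds p) := by
        have hd : HasDerivAt (fun x : ℝ => x ^ p) p 1 := by
          have := Real.hasDerivAt_rpow_const (x := (1:ℝ)) (p := p) (Or.inl one_ne_zero)
          simpa using this
        have := hasDerivAt_iff_tendsto_slope.mp hd
        have h2 : Filter.Tendsto (slope (fun x : ℝ => x ^ p) 1)
            (nhdsWithin 1 (Set.Iio 1)) (nhds p) :=
          this.mono_left (nhdsWithin_mono 1 (fun x hx => ne_of_lt hx))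
        refine h2.congr' ?_
        filter_upwards [self_mem_nhdsWithin] with a (ha : a < 1)
        rw [slope_def_field, Real.one_rpow,
          show (1:ℝ) - a ^ p = -(a ^ p - 1) by ring,
          show (1:ℝ) - a = -(a - 1) by ring, neg_div_neg_eq]
      have hA : Filter.Tendsto (fun a : ℝ => (1 + a) + (1 - a ^ p) / (1 - a))
          (nhdsWithin 1 (Set.Iio 1)) (nhds (2 + p)) := by
        have hc : Filter.Tendsto (fun a : ℝ => 1 + a)
            (nhdsWithin 1 (Set.Iio 1)) (nhds 2) := by
          have h1 : Filter.Tendsto (fun a : ℝ => 1 + a) (nhds 1) (nhds (1 + 1)) :=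
            (Filter.tendsto_id (x := nhds (1:ℝ))).const_add 1
          norm_num at h1
          exact h1.mono_left nhdsWithin_le_nhds
        exact hc.add hslope
      have hlim : Filter.Tendsto f (nhdsWithin 1 (Set.Iio 1)) (nhds (p / (2 + p))) := by
        have hdiv := hslope.div hA (by positivity)
        refine hdiv.congr' ?_
        filter_upwards [Ioo_mem_nhdsLT_of_mem (Set.mem_Ioc.mpr ⟨zero_lt_one, le_rfl⟩)]
          with a ha
        have h1a : (1:ℝ) - a ≠ 0 := by have := ha.2; intro hh; nlinarith
        have hap : a ^ p < 1 := Real.rpow_lt_one ha.1.le ha.2 hp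
        have hD : (2:ℝ) - a ^ 2 - a ^ p ≠ 0 := by nlinarith [ha.1, ha.2]
        have hAa : 1 + a + (1 - a ^ p) / (1 - a) = (2 - a ^ 2 - a ^ p) / (1 - a) := by
          field_simp
          ring
        show (1 - a ^ p) / (1 - a) / (1 + a + (1 - a ^ p) / (1 - a)) = f a
        rw [hAa, hf]
        rw [div_div_div_cancel_right₀]
        exact h1a
      refine ge_of_tendsto hlim ?_
      filter_upwards [Ioo_mem_nhdsLT_of_mem (Set.mem_Ioc.mpr ⟨zero_lt_one, le_rfl⟩)]
        with a ha
      exact csInf_le hbdd ⟨a, ⟨ha.1.le, ha.2⟩, rfl⟩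
  · refine le_csInf ⟨f 0, 0, ⟨le_rfl, one_pos⟩, rfl⟩ ?_
    rintro x ⟨a, ⟨ha0, ha1⟩, rfl⟩
    exact lower p hp a ha0 ha1
end

section
/- Let k, m ∈ ℕ with k ≤ m / log₃(2√2 + 1), and define Ψ₆(r) = 11r^{2m+k} − 6r^{2m} − 8r^{k+m} + 2r^m + r^k. Then Ψ₆(r) ≥ 0 for all 0 ≤ r ≤ 3^{−1/k}. -/
/-- Lemma 5: if k ≤ m / log₃(2√2 + 1), then
Ψ₆(r) = 11r^{2m+k} − 6r^{2m} − 8r^{k+m} + 2r^m + r^k ≥ 0 on [0, 3^{−1/k}]. -/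
theorem stmt_7 (k m : ℕ) (hk : 0 < k) (hm : 0 < m)
    (h : (k : ℝ) ≤ (m : ℝ) / Real.logb 3 (2 * Real.sqrt 2 + 1)) :
    ∀ r : ℝ, 0 ≤ r → r ≤ (3 : ℝ) ^ (-(1 / (k : ℝ))) →
      0 ≤ 11 * r ^ (2 * m + k) - 6 * r ^ (2 * m) - 8 * r ^ (k + m)
          + 2 * r ^ m + r ^ k := by
  intro r hr0 hr1
  set s := Real.sqrt 2 with hs
  have hs0 : (0:ℝ) ≤ s := Real.sqrt_nonneg 2
  have hs2 : s ^ 2 = 2 := Real.sq_sqrt (by norm_num)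
  have ha1 : (1:ℝ) < 2 * s + 1 := by nlinarith
  have hL : 0 < Real.logb 3 (2 * s + 1) :=
    Real.logb_pos (by norm_num) ha1
  have hkL : (k:ℝ) * Real.logb 3 (2 * s + 1) ≤ (m:ℝ) :=
    (le_div_iff₀ hL).mp h
  have hk0 : (0:ℝ) < (k:ℝ) := by exact_mod_cast hk
  -- x = r^k ≤ 1/3
  have hxk : r ^ k ≤ 1 / 3 := by
    calc r ^ k ≤ ((3:ℝ) ^ (-(1 / (k:ℝ)))) ^ k := pow_le_pow_left₀ hr0 hr1 k
    _ = (3:ℝ) ^ (-(1 / (k:ℝ)) * k) := by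
        rw [← Real.rpow_natCast ((3:ℝ) ^ (-(1 / (k:ℝ)))) k, ← Real.rpow_mul (by norm_num)]
    _ = 1 / 3 := by
        rw [show -(1 / (k:ℝ)) * k = -1 by field_simp]
        rw [Real.rpow_neg_one]; norm_num
  -- y = r^m ≤ (2s+1)⁻¹
  have hym : r ^ m * (2 * s + 1) ≤ 1 := by
    have h1 : r ^ m ≤ (3:ℝ) ^ (-(1 / (k:ℝ)) * m) := by
      calc r ^ m ≤ ((3:ℝ) ^ (-(1 / (k:ℝ)))) ^ m := pow_le_pow_left₀ hr0 hr1 m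
      _ = (3:ℝ) ^ (-(1 / (k:ℝ)) * m) := by
          rw [← Real.rpow_natCast ((3:ℝ) ^ (-(1 / (k:ℝ)))) m, ← Real.rpow_mul (by norm_num)]
    have h2 : (3:ℝ) ^ (-(1 / (k:ℝ)) * m) ≤ (3:ℝ) ^ (-(Real.logb 3 (2 * s + 1))) := by
      apply Real.rpow_le_rpow_of_exponent_le (by norm_num)
      have hmk : Real.logb 3 (2 * s + 1) ≤ (m:ℝ) / k := (le_div_iff₀ hk0).mpr (by linarith)
      rw [show -(1 / (k:ℝ)) * m = -((m:ℝ) / k) by ring]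
      exact neg_le_neg hmk
    have h3 : (3:ℝ) ^ (-(Real.logb 3 (2 * s + 1))) = (2 * s + 1)⁻¹ := by
      rw [Real.rpow_neg (by norm_num), Real.rpow_logb (by norm_num) (by norm_num) (by linarith)]
    have h4 : r ^ m ≤ (2 * s + 1)⁻¹ := by rw [← h3]; linarith
    calc r ^ m * (2 * s + 1) ≤ (2 * s + 1)⁻¹ * (2 * s + 1) :=
      mul_le_mul_of_nonneg_right h4 (by linarith)
    _ = 1 := inv_mul_cancel₀ (by linarith)
  have hy0 : 0 ≤ r ^ m := pow_nonneg hr0 m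
  have hx0 : 0 ≤ r ^ k := pow_nonneg hr0 k
  set x := r ^ k with hxdef
  set y := r ^ m with hydef
  have key : 7 * y ^ 2 + 2 * y ≤ 1 := by
    have h7 : 7 * y ≤ 2 * s - 1 := by nlinarith [mul_le_mul_of_nonneg_left hym (by nlinarith : (0:ℝ) ≤ 2 * s - 1)]
    nlinarith [sq_nonneg (7 * y), h7, mul_self_le_mul_self (by linarith : (0:ℝ) ≤ 7*y) h7]
  have hrw1 : r ^ (2 * m + k) = y * y * x := by rw [pow_add, pow_mul, pow_two]; ring
  have hrw2 : r ^ (2 * m) = y * y := by rw [two_mul, pow_add]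
  have hrw3 : r ^ (k + m) = x * y := by rw [pow_add]
  rw [hrw1, hrw2, hrw3]
  clear_value x y
  clear h hr1 hkL hL hym hrw1 hrw2 hrw3 hxdef hydef hs hs0 hs2 ha1 hk0
  rcases le_or_gt 0 (11 * y ^ 2 - 8 * y + 1) with hc | hc
  · have h1 : 0 ≤ x * (11 * y ^ 2 - 8 * y + 1) := mul_nonneg hx0 hc
    have h2 : 0 ≤ 1 - 3 * y := by nlinarith
    nlinarith [mul_nonneg hy0 h2]
  · have h1 : 0 ≤ (1 / 3 - x) * (-(11 * y ^ 2 - 8 * y + 1)) :=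
      mul_nonneg (by linarith) (by linarith)
    nlinarith [h1, key]
end
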